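/- arXiv:1602.09051 — 2 statements merged into one kernel-verified Lean document; each statement's English description precedes it below -/
import Mathlib

section
/- For a ring R, S = R[[t]], and y a power series with zero constant term, the substitution endomorphism Sub(y) of S is an automorphism if and only if the coefficient of t in y is a unit of R. -/
/-!
A `t`-adically continuous `R`-algebra endomorphism of `R⟦X⟧` is determined by the image of `X`,
because truncations converge; so `φ` is substitution of `y`. If `φ ∘ ψ = id`, the coefficient of
`X` in `φ (ψ X) = X` is `coeff 1 (ψ X) * coeff 1 y = 1`. Conversely, when `coeff 1 y` is a unit,
`y` has a compositional inverse `z`, and substitution of `z` is a continuous two-sided inverse.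
-/

/-- The `t`-adic topology on the power series ring `R[[t]]`. -/
def psTop (R : Type*) [CommRing R] : TopologicalSpace (PowerSeries R) :=
  TopologicalSpace.generateFrom
    {U | ∃ (f : PowerSeries R) (n : ℕ),
      U = {g : PowerSeries R | ∀ i < n, PowerSeries.coeff i (g - f) = 0}}

open TopologicalSpace

namespace PowerSeries

variable {R : Type*} [CommRing R]

lemma isTopologicalBasis_psTop :
    @IsTopologicalBasis _ (psTop R) {U | ∃ (f : R⟦X⟧) (n : ℕ), U = {g | X ^ n ∣ g - f}} := by
  let := psTop R
  have ball_eq_of_mem {f h : R⟦X⟧} {n : ℕ} (hf : X ^ n ∣ f - h) :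
      {g : R⟦X⟧ | X ^ n ∣ g - h} = {g | X ^ n ∣ g - f} := by
    ext g
    rw [Set.mem_ofPred_eq, ← sub_add_sub_cancel g f h, dvd_add_left hf, Set.mem_ofPred_eq]
  refine ⟨?_, ?_, ?_⟩
  · rintro _ ⟨h₁, n₁, rfl⟩ _ ⟨h₂, n₂, rfl⟩ f ⟨hf₁, hf₂⟩
    refine ⟨{g | X ^ (max n₁ n₂) ∣ g - f}, ⟨f, _, rfl⟩, by simp, ?_⟩
    rw [ball_eq_of_mem hf₁, ball_eq_of_mem hf₂]
    exact fun g hg => ⟨(pow_dvd_pow X (le_max_left n₁ n₂)).trans hg,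
      (pow_dvd_pow X (le_max_right n₁ n₂)).trans hg⟩
  · exact Set.sUnion_eq_univ_iff.mpr fun f => ⟨_, ⟨f, 0, rfl⟩, by simp⟩
  · simp only [X_pow_dvd_iff]
    rfl

lemma hasBasis_nhds_psTop (f : R⟦X⟧) :
    (@nhds _ (psTop R) f).HasBasis (fun _ : ℕ => True) (fun n => {g | X ^ n ∣ g - f}) := by
  let := psTop R
  refine isTopologicalBasis_psTop.nhds_hasBasis.to_hasBasis ?_ ?_
  · rintro _ ⟨⟨h, n, rfl⟩, hfU⟩
    refine ⟨n, trivial, fun g hg => ?_⟩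
    show X ^ n ∣ g - h
    rw [← sub_add_sub_cancel g f h]
    exact dvd_add hg hfU
  · exact fun n _ => ⟨_, ⟨⟨f, n, rfl⟩, by simp⟩, subset_rfl⟩

lemma continuous_psTop_iff {F : Type*} [FunLike F R⟦X⟧ R⟦X⟧] [AddMonoidHomClass F R⟦X⟧ R⟦X⟧]
    (φ : F) :
    @Continuous _ _ (psTop R) (psTop R) φ ↔ ∀ n, ∃ m, ∀ g : R⟦X⟧, X ^ m ∣ g → X ^ n ∣ φ g := by
  let := psTop R
  simp only [continuous_iff_continuousAt, ContinuousAt,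
    (hasBasis_nhds_psTop _).tendsto_iff (hasBasis_nhds_psTop _), true_and, forall_const,
    Set.mem_ofPred_eq, ← map_sub]
  refine ⟨fun h n => ?_, fun h f n => ?_⟩
  · simpa using h 0 n
  · obtain ⟨m, hm⟩ := h n
    exact ⟨m, fun g => hm (g - f)⟩

lemma X_pow_dvd_sub_trunc (n : ℕ) (f : R⟦X⟧) : X ^ n ∣ f - (trunc n f : R⟦X⟧) :=
  ⟨_, sub_eq_iff_eq_add.mpr (eq_X_pow_mul_shift_add_trunc n f)⟩

lemma continuous_substAlgHom {a : R⟦X⟧} (ha : constantCoeff a = 0) :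
    @Continuous _ _ (psTop R) (psTop R) (substAlgHom (HasSubst.of_constantCoeff_zero' ha) :
      R⟦X⟧ →ₐ[R] R⟦X⟧) := by
  refine (continuous_psTop_iff _).mpr fun n => ⟨n, ?_⟩
  rintro _ ⟨g, rfl⟩
  rw [map_mul, map_pow, substAlgHom_X]
  exact dvd_mul_of_dvd_left (pow_dvd_pow_of_dvd (X_dvd_iff.mpr ha) n) _

lemma algHom_ext_of_continuous_psTop {φ ψ : R⟦X⟧ →ₐ[R] R⟦X⟧}
    (hφ : @Continuous _ _ (psTop R) (psTop R) φ) (hψ : @Continuous _ _ (psTop R) (psTop R) ψ)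
    (h : φ X = ψ X) : φ = ψ := by
  have h_poly : φ.comp (Polynomial.coeToPowerSeries.algHom R) =
      ψ.comp (Polynomial.coeToPowerSeries.algHom R) :=
    Polynomial.algHom_ext (by simpa using h)
  ext f n
  obtain ⟨m₁, hm₁⟩ := (continuous_psTop_iff φ).mp hφ (n + 1)
  obtain ⟨m₂, hm₂⟩ := (continuous_psTop_iff ψ).mp hψ (n + 1)
  set p : R⟦X⟧ := ↑(trunc (m₁ + m₂) f)
  have hfp : X ^ (m₁ + m₂) ∣ f - p := X_pow_dvd_sub_trunc _ f
  have hφp := X_pow_dvd_iff.mp (map_sub φ f p ▸ hm₁ _ ((pow_dvd_pow X le_self_add).trans hfp))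
    n n.lt_succ_self
  have hψp := X_pow_dvd_iff.mp (map_sub ψ f p ▸ hm₂ _ ((pow_dvd_pow X le_add_self).trans hfp))
    n n.lt_succ_self
  rw [map_sub, sub_eq_zero] at hφp hψp
  rw [hφp, hψp]
  exact congrArg (coeff n) (AlgHom.congr_fun h_poly (trunc (m₁ + m₂) f))

lemma coeff_one_algHom_apply (φ : R⟦X⟧ →ₐ[R] R⟦X⟧) (hφ : constantCoeff (φ X) = 0) (f : R⟦X⟧) :
    coeff 1 (φ f) = coeff 1 f * coeff 1 (φ X) := by
  set c₀ := coeff 0 f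
  set c₁ := coeff 1 f
  obtain ⟨g, hg⟩ : X ^ 2 ∣ f - (C c₀ + C c₁ * X) := by
    refine X_pow_dvd_iff.mpr fun i hi => ?_
    interval_cases i <;> simp [c₀, c₁]
  have hφf : φ f = φ X ^ 2 * φ g + C c₁ * φ X + C c₀ := by
    have hC (r : R) : φ (C r) = C r := by rw [C_eq_algebraMap, AlgHom.commutes]
    rw [sub_eq_iff_eq_add.mp hg, map_add, map_add, map_mul, map_mul, map_pow, hC, hC]
    ring
  have hX2 : coeff 1 (φ X ^ 2 * φ g) = 0 :=
    X_pow_dvd_iff.mp ((pow_dvd_pow_of_dvd (X_dvd_iff.mpr hφ) 2).mul_right _) 1 one_lt_two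
  rw [hφf, map_add, map_add, hX2, coeff_C_mul, coeff_C, if_neg one_ne_zero]
  ring

lemma algHom_eq_substAlgHom {φ : R⟦X⟧ →ₐ[R] R⟦X⟧} (hφ : @Continuous _ _ (psTop R) (psTop R) φ)
    {y : R⟦X⟧} (hy : constantCoeff y = 0) (hφX : φ X = y) :
    φ = substAlgHom (HasSubst.of_constantCoeff_zero' hy) :=
  algHom_ext_of_continuous_psTop hφ (continuous_substAlgHom hy) (hφX.trans (substAlgHom_X _).symm)

end PowerSeries

open PowerSeries in
/-- For `y ∈ R[[t]]` with zero constant term, the substitution endomorphism `Sub(y)`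
(the continuous `R`-algebra endomorphism with `t ↦ y`) is an automorphism (i.e. has a
continuous two-sided inverse) if and only if the coefficient of `t` in `y` is a unit. -/
theorem sub_isAut_iff_coeff_one_isUnit (R : Type*) [CommRing R]
    (y : PowerSeries R) (hy : PowerSeries.constantCoeff y = 0)
    (φ : PowerSeries R →ₐ[R] PowerSeries R)
    (hφ : @Continuous _ _ (psTop R) (psTop R) φ) (hφX : φ PowerSeries.X = y) :
    (∃ ψ : PowerSeries R →ₐ[R] PowerSeries R,
        @Continuous _ _ (psTop R) (psTop R) ψ ∧
        φ.comp ψ = AlgHom.id R (PowerSeries R) ∧ ψ.comp φ = AlgHom.id R (PowerSeries R)) ↔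
      IsUnit (PowerSeries.coeff 1 y) := by
  let := psTop R
  constructor
  · rintro ⟨ψ, -, hφψ, -⟩
    have h := coeff_one_algHom_apply φ (hφX ▸ hy) (ψ X)
    rw [← AlgHom.comp_apply, hφψ, AlgHom.id_apply, coeff_X, if_pos rfl, hφX] at h
    exact IsUnit.of_mul_eq_one_right _ h.symm
  · intro hu
    have hz := constantCoeff_substInvOfIsUnit _ hu
    have hψ := continuous_substAlgHom hz
    obtain rfl := algHom_eq_substAlgHom hφ hy hφX
    refine ⟨_, hψ, ?_, ?_⟩
    · refine algHom_ext_of_continuous_psTop (hφ.comp hψ) continuous_id ?_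
      rw [AlgHom.comp_apply, substAlgHom_X, coe_substAlgHom, subst_substInvOfIsUnit_left y hy hu,
        AlgHom.id_apply]
    · refine algHom_ext_of_continuous_psTop (hψ.comp hφ) continuous_id ?_
      rw [AlgHom.comp_apply, substAlgHom_X, coe_substAlgHom, subst_substInvOfIsUnit_right y hy hu,
        AlgHom.id_apply]
end

section
/- Let p be prime and suppose sequences (a_n)_{n∈Z}, (b_n)_{n∈Z} in Z[1/p]_{≥0} ∪ {+∞} satisfy: a_n = b_n = 0 for n ≤ 0; 0 < a_1, b_1 < +∞; and a_n → ∞, b_n → ∞. Define c = min{ (p^n/(p^n−1)) a_n, (p^n/(p^n−1)) b_n : n ≥ 1 } and c_n = ((p^n−1)/p^n) c. Then a_n ≥ c_n and b_n ≥ c_n for all n ∈ Z; there exist maximal indices l, m with a_l = c_l and b_m = c_m; and l, m ≥ 0 with l + m > 0. -/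
/-! Since the weights `p^n/(p^n-1)` are at least `1` and `a_n, b_n → ∞`, only finitely many
weighted values lie below the one at `n = 1`, so the minimum `c` exists. For `n ≥ 1` the bound
`c_n ≤ a_n` is a rewriting of `c ≤ (p^n/(p^n-1)) a_n`, and for `n ≤ 0` it holds because
`c_n ≤ 0`. The `c_n` stay below `c` while `a_n → ∞`, so `a_n = c_n` has a largest solution `l`,
which is `≥ 0` as `a_0 = 0 = c_0`; the index `n ≥ 1` at which `c` is attained solves `a_n = c_n`
or `b_n = c_n`, which forces `l + m ≥ 1`. -/

/-- The set of nonnegative elements of `ℤ[1/p]`, viewed inside `ℚ`. -/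
def IsPAdicNN (p : ℕ) (q : ℚ) : Prop := 0 ≤ q ∧ ∃ (a : ℤ) (n : ℕ), q = a / p ^ n

theorem exists_minOn_of_eventually_gt {β : Type*} [LinearOrder β] {s : Set ℕ} {h : ℕ → β}
    {n₁ N : ℕ} (hn₁ : n₁ ∈ s) (hN : ∀ n ≥ N, h n₁ < h n) : ∃ n₀ ∈ s, ∀ n ∈ s, h n₀ ≤ h n := by
  obtain ⟨n₀, ⟨hn₀, -⟩, hmin⟩ := Set.exists_min_image (s ∩ Set.Iio (max N (n₁ + 1))) h
    ((Set.finite_Iio _).inter_of_right s) ⟨n₁, hn₁, by simp⟩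
  refine ⟨n₀, hn₀, fun n hn => ?_⟩
  by_cases hnN : n < max N (n₁ + 1)
  · exact hmin n ⟨hn, hnN⟩
  · exact (hmin n₁ ⟨hn₁, by simp⟩).trans (hN n (by omega)).le

theorem Int.exists_greatest_eq_of_le_of_eventually_gt {β : Type*} [Preorder β] {f g : ℤ → β}
    {C : β} {k N : ℤ} (hg : ∀ n, g n ≤ C) (hf : ∀ n ≥ N, C < f n) (hk : f k = g k) :
    ∃ l, k ≤ l ∧ f l = g l ∧ ∀ n, l < n → f n ≠ g n := by
  have hbdd : ∀ n, f n = g n → n ≤ N := fun n hn =>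
    le_of_not_gt fun hNn => (hf n hNn.le).not_ge (hn ▸ hg n)
  obtain ⟨l, hl, hmax⟩ := Int.exists_greatest_of_bdd ⟨N, hbdd⟩ ⟨k, hk⟩
  exact ⟨l, hmax k hk, hl, fun n hln hn => (hmax n hn).not_gt hln⟩

theorem nonneg_of_eq_top_or_isPAdicNN {p : ℕ} {t : WithTop ℚ}
    (ht : t = ⊤ ∨ ∃ q : ℚ, IsPAdicNN p q ∧ t = q) : 0 ≤ t := by
  rcases ht with rfl | ⟨q, hq, rfl⟩
  · exact le_top
  · exact WithTop.coe_nonneg.mpr hq.1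

namespace PerfectSupport

def weight (p : ℚ) (n : ℕ) : ℚ := p ^ n / (p ^ n - 1)

-- The paper's `c_n`.
def cutoff (p c : ℚ) (n : ℤ) : ℚ := (p ^ n - 1) / p ^ n * c

variable {p c : ℚ}

theorem one_le_weight (hp : 1 < p) {n : ℕ} (hn : 1 ≤ n) : 1 ≤ weight p n := by
  have : 1 < p ^ n := one_lt_pow₀ hp (by omega)
  rw [weight, le_div_iff₀ (by linarith)]
  linarith

theorem cutoff_natCast (n : ℕ) : cutoff p c n = c / weight p n := by
  rw [cutoff, weight, zpow_natCast, div_div_eq_mul_div, mul_div_assoc, mul_comm]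

theorem cutoff_zero : cutoff p c 0 = 0 := by simp [cutoff]

theorem cutoff_le_self (hp : 1 < p) (hc : 0 ≤ c) (n : ℤ) : cutoff p c n ≤ c := by
  have hpn : 0 < p ^ n := zpow_pos (by linarith) n
  refine mul_le_of_le_one_left hc ?_
  rw [div_le_one hpn]
  linarith

theorem cutoff_nonpos (hp : 1 < p) (hc : 0 ≤ c) {n : ℤ} (hn : n ≤ 0) : cutoff p c n ≤ 0 :=
  mul_nonpos_of_nonpos_of_nonneg (div_nonpos_of_nonpos_of_nonneg
    (by linarith [zpow_le_one_of_nonpos₀ hp.le hn]) (zpow_pos (by linarith) n).le) hc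

theorem le_coe_weight_mul (hp : 1 < p) {n : ℕ} (hn : 1 ≤ n) {t : WithTop ℚ} (ht : 0 ≤ t) :
    t ≤ (weight p n : WithTop ℚ) * t := by
  have hw := one_le_weight hp hn
  induction t using WithTop.recTopCoe with
  | top => rw [WithTop.mul_top (by exact_mod_cast (zero_lt_one.trans_le hw).ne')]
  | coe q =>
    rw [← WithTop.coe_mul]
    exact_mod_cast le_mul_of_one_le_left (WithTop.coe_nonneg.mp ht) hw

theorem coe_cutoff_le_of_coe_le_weight_mul (hp : 1 < p) {n : ℕ} (hn : 1 ≤ n) {t : WithTop ℚ}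
    (h : (c : WithTop ℚ) ≤ (weight p n : WithTop ℚ) * t) : (cutoff p c n : WithTop ℚ) ≤ t := by
  induction t using WithTop.recTopCoe with
  | top => exact le_top
  | coe q =>
    rw [← WithTop.coe_mul, WithTop.coe_le_coe] at h
    rw [WithTop.coe_le_coe, cutoff_natCast, div_le_iff₀' (by linarith [one_le_weight hp hn])]
    exact h

theorem eq_coe_cutoff_of_weight_mul_eq (hp : 1 < p) {n : ℕ} (hn : 1 ≤ n) {t : WithTop ℚ}
    (h : (weight p n : WithTop ℚ) * t = c) : t = (cutoff p c n : WithTop ℚ) := by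
  have hw : weight p n ≠ 0 := by linarith [one_le_weight hp hn]
  induction t using WithTop.recTopCoe with
  | top => exact absurd h (by rw [WithTop.mul_top (by exact_mod_cast hw)]; exact WithTop.top_ne_coe)
  | coe q =>
    rw [← WithTop.coe_mul, WithTop.coe_inj] at h
    rw [WithTop.coe_inj, cutoff_natCast, ← h, mul_div_cancel_left₀ _ hw]

variable {a b f : ℤ → WithTop ℚ}

def weightedValues (p : ℚ) (a b : ℤ → WithTop ℚ) : Set ℚ :=
  {x | ∃ n : ℕ, 1 ≤ n ∧
    ((weight p n : WithTop ℚ) * a n = (x : WithTop ℚ) ∨ (weight p n : WithTop ℚ) * b n = x)}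

theorem eventually_lt_weight_mul (hp : 1 < p) (hf : ∀ n, 0 ≤ f n)
    (htop : ∀ B : ℚ, ∃ N : ℤ, ∀ n ≥ N, (B : WithTop ℚ) < f n) (B : ℚ) :
    ∃ N : ℕ, ∀ n ≥ N, (B : WithTop ℚ) < (weight p n : WithTop ℚ) * f n := by
  obtain ⟨N, hN⟩ := htop B
  exact ⟨max N.toNat 1, fun n hn =>
    (hN n (by omega)).trans_le (le_coe_weight_mul hp (by omega) (hf n))⟩

theorem exists_isLeast_weightedValues (hp : 1 < p) (ha : ∀ n, 0 ≤ a n) (hb : ∀ n, 0 ≤ b n)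
    (ha₁ : a 1 ≠ ⊤) (htopa : ∀ B : ℚ, ∃ N : ℤ, ∀ n ≥ N, (B : WithTop ℚ) < a n)
    (htopb : ∀ B : ℚ, ∃ N : ℤ, ∀ n ≥ N, (B : WithTop ℚ) < b n) :
    ∃ c, IsLeast (weightedValues p a b) c := by
  set h : ℕ → WithTop ℚ := fun n => min (weight p n * a n) (weight p n * b n) with hh
  obtain ⟨q₁, hq₁⟩ := WithTop.ne_top_iff_exists.mp ha₁
  have hh₁ : h 1 ≤ (weight p 1 * q₁ : ℚ) := by
    simp only [hh, Nat.cast_one, ← hq₁, WithTop.coe_mul]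
    exact min_le_left _ _
  obtain ⟨Na, hNa⟩ := eventually_lt_weight_mul hp ha htopa (weight p 1 * q₁)
  obtain ⟨Nb, hNb⟩ := eventually_lt_weight_mul hp hb htopb (weight p 1 * q₁)
  obtain ⟨n₀, hn₀, hmin⟩ := exists_minOn_of_eventually_gt (s := Set.Ici 1) (N := max Na Nb)
    (Set.mem_Ici.mpr le_rfl) fun n hn =>
      hh₁.trans_lt (lt_min (hNa n (le_of_max_le_left hn)) (hNb n (le_of_max_le_right hn)))
  obtain ⟨c, hc⟩ := WithTop.ne_top_iff_exists.mp
    ((hmin 1 (Set.mem_Ici.mpr le_rfl)).trans_lt (hh₁.trans_lt (WithTop.coe_lt_top _))).ne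
  refine ⟨c, ⟨n₀, hn₀, ?_⟩, fun x ⟨n, hn, hx⟩ => WithTop.coe_le_coe.mp ?_⟩
  · rcases min_choice (weight p n₀ * a n₀) (weight p n₀ * b n₀) with h₀ | h₀
    · exact Or.inl (hc.trans h₀).symm
    · exact Or.inr (hc.trans h₀).symm
  · refine hc ▸ (hmin n hn).trans ?_
    rcases hx with hx | hx
    · exact hx ▸ min_le_left _ _
    · exact hx ▸ min_le_right _ _

theorem nonneg_of_mem_weightedValues (hp : 1 < p) (ha : ∀ n, 0 ≤ a n) (hb : ∀ n, 0 ≤ b n)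
    {x : ℚ} (hx : x ∈ weightedValues p a b) : 0 ≤ x := by
  obtain ⟨n, hn, hx | hx⟩ := hx
  · exact WithTop.coe_nonneg.mp (hx ▸ (ha n).trans (le_coe_weight_mul hp hn (ha n)))
  · exact WithTop.coe_nonneg.mp (hx ▸ (hb n).trans (le_coe_weight_mul hp hn (hb n)))

theorem le_weight_mul_of_isLeast (hc : IsLeast (weightedValues p a b) c) {n : ℕ} (hn : 1 ≤ n) :
    (c : WithTop ℚ) ≤ weight p n * a n ∧ (c : WithTop ℚ) ≤ weight p n * b n :=
  ⟨WithTop.coe_le_iff.mpr fun _ hx => hc.2 ⟨n, hn, Or.inl hx⟩,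
    WithTop.coe_le_iff.mpr fun _ hx => hc.2 ⟨n, hn, Or.inr hx⟩⟩

theorem coe_cutoff_le (hp : 1 < p) (hc : 0 ≤ c) (hf₀ : ∀ n ≤ 0, f n = 0)
    (hf : ∀ n : ℕ, 1 ≤ n → (c : WithTop ℚ) ≤ weight p n * f n) (n : ℤ) :
    (cutoff p c n : WithTop ℚ) ≤ f n := by
  rcases le_or_gt n 0 with hn | hn
  · rw [hf₀ n hn]
    exact WithTop.coe_le_coe.mpr (cutoff_nonpos hp hc hn)
  · lift n to ℕ using hn.le
    exact coe_cutoff_le_of_coe_le_weight_mul hp (by omega) (hf n (by omega))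

theorem exists_maximal_eq_cutoff (hp : 1 < p) (hc : 0 ≤ c) (hf₀ : ∀ n ≤ 0, f n = 0)
    (htop : ∀ B : ℚ, ∃ N : ℤ, ∀ n ≥ N, (B : WithTop ℚ) < f n) :
    ∃ l, 0 ≤ l ∧ f l = cutoff p c l ∧ ∀ n, l < n → f n ≠ cutoff p c n := by
  obtain ⟨N, hN⟩ := htop c
  exact Int.exists_greatest_eq_of_le_of_eventually_gt
    (fun n => WithTop.coe_le_coe.mpr (cutoff_le_self hp hc n)) hN
    (by rw [hf₀ 0 le_rfl, cutoff_zero, WithTop.coe_zero])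

end PerfectSupport

open PerfectSupport in
theorem exists_min_and_maximal_indices_general (p : ℕ) [Fact p.Prime] (a b : ℤ → WithTop ℚ)
    (hvala : ∀ n : ℤ, a n = ⊤ ∨ ∃ q : ℚ, IsPAdicNN p q ∧ a n = (q : WithTop ℚ))
    (hvalb : ∀ n : ℤ, b n = ⊤ ∨ ∃ q : ℚ, IsPAdicNN p q ∧ b n = (q : WithTop ℚ))
    (h0a : ∀ n : ℤ, n ≤ 0 → a n = 0) (h0b : ∀ n : ℤ, n ≤ 0 → b n = 0)
    (h1a : 0 < a 1 ∧ a 1 < ⊤)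
    (htopa : ∀ B : ℚ, ∃ N : ℤ, ∀ n ≥ N, (B : WithTop ℚ) < a n)
    (htopb : ∀ B : ℚ, ∃ N : ℤ, ∀ n ≥ N, (B : WithTop ℚ) < b n) :
    ∃ c : ℚ,
      IsLeast {x : ℚ | ∃ n : ℕ, 1 ≤ n ∧
        ((((p : ℚ) ^ n / ((p : ℚ) ^ n - 1) : ℚ) : WithTop ℚ) * a n = (x : WithTop ℚ) ∨
          (((p : ℚ) ^ n / ((p : ℚ) ^ n - 1) : ℚ) : WithTop ℚ) * b n = (x : WithTop ℚ))} c ∧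
      (∀ n : ℤ, ((((p : ℚ) ^ n - 1) / (p : ℚ) ^ n * c : ℚ) : WithTop ℚ) ≤ a n ∧
        ((((p : ℚ) ^ n - 1) / (p : ℚ) ^ n * c : ℚ) : WithTop ℚ) ≤ b n) ∧
      ∃ l m : ℤ, 0 ≤ l ∧ 0 ≤ m ∧ 0 < l + m ∧
        a l = ((((p : ℚ) ^ l - 1) / (p : ℚ) ^ l * c : ℚ) : WithTop ℚ) ∧
        (∀ n : ℤ, l < n → a n ≠ ((((p : ℚ) ^ n - 1) / (p : ℚ) ^ n * c : ℚ) : WithTop ℚ)) ∧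
        b m = ((((p : ℚ) ^ m - 1) / (p : ℚ) ^ m * c : ℚ) : WithTop ℚ) ∧
        (∀ n : ℤ, m < n → b n ≠ ((((p : ℚ) ^ n - 1) / (p : ℚ) ^ n * c : ℚ) : WithTop ℚ)) := by
  have hp : (1 : ℚ) < p := by exact_mod_cast (Fact.out : p.Prime).one_lt
  have ha n := nonneg_of_eq_top_or_isPAdicNN (hvala n)
  have hb n := nonneg_of_eq_top_or_isPAdicNN (hvalb n)
  obtain ⟨c, hc⟩ := exists_isLeast_weightedValues hp ha hb h1a.2.ne htopa htopb
  have hc₀ := nonneg_of_mem_weightedValues hp ha hb hc.1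
  obtain ⟨l, hl, hla, hlmax⟩ := exists_maximal_eq_cutoff hp hc₀ h0a htopa
  obtain ⟨m, hm, hmb, hmmax⟩ := exists_maximal_eq_cutoff hp hc₀ h0b htopb
  have hlm : 0 < l + m := by
    obtain ⟨n, hn, h | h⟩ := hc.1
    · have := le_of_not_gt fun hln => hlmax n hln (eq_coe_cutoff_of_weight_mul_eq hp hn h)
      omega
    · have := le_of_not_gt fun hmn => hmmax n hmn (eq_coe_cutoff_of_weight_mul_eq hp hn h)
      omega
  exact ⟨c, hc, fun n =>
    ⟨coe_cutoff_le hp hc₀ h0a (fun k hk => (le_weight_mul_of_isLeast hc hk).1) n,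
      coe_cutoff_le hp hc₀ h0b (fun k hk => (le_weight_mul_of_isLeast hc hk).2) n⟩,
    l, m, hl, hm, hlm, hla, hlmax, hmb, hmmax⟩

/-- For sequences `(a_n), (b_n)` in `ℤ[1/p]_{≥0} ∪ {+∞}` with `a_n = b_n = 0` for `n ≤ 0`,
`0 < a_1, b_1 < +∞`, and `a_n, b_n → ∞`: setting
`c = min{ (p^n/(p^n−1)) a_n, (p^n/(p^n−1)) b_n : n ≥ 1 }` and `c_n = ((p^n−1)/p^n)·c`, one
has `a_n ≥ c_n` and `b_n ≥ c_n` for all `n ∈ ℤ`; there are maximal indices `l, m` with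
`a_l = c_l` and `b_m = c_m`; and `l, m ≥ 0` with `l + m > 0`. -/
theorem exists_min_and_maximal_indices (p : ℕ) [Fact p.Prime] (a b : ℤ → WithTop ℚ)
    (hvala : ∀ n : ℤ, a n = ⊤ ∨ ∃ q : ℚ, IsPAdicNN p q ∧ a n = (q : WithTop ℚ))
    (hvalb : ∀ n : ℤ, b n = ⊤ ∨ ∃ q : ℚ, IsPAdicNN p q ∧ b n = (q : WithTop ℚ))
    (h0a : ∀ n : ℤ, n ≤ 0 → a n = 0) (h0b : ∀ n : ℤ, n ≤ 0 → b n = 0)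
    (h1a : 0 < a 1 ∧ a 1 < ⊤) (h1b : 0 < b 1 ∧ b 1 < ⊤)
    (htopa : ∀ B : ℚ, ∃ N : ℤ, ∀ n ≥ N, (B : WithTop ℚ) < a n)
    (htopb : ∀ B : ℚ, ∃ N : ℤ, ∀ n ≥ N, (B : WithTop ℚ) < b n) :
    ∃ c : ℚ,
      IsLeast {x : ℚ | ∃ n : ℕ, 1 ≤ n ∧
        ((((p : ℚ) ^ n / ((p : ℚ) ^ n - 1) : ℚ) : WithTop ℚ) * a n = (x : WithTop ℚ) ∨
          (((p : ℚ) ^ n / ((p : ℚ) ^ n - 1) : ℚ) : WithTop ℚ) * b n = (x : WithTop ℚ))} c ∧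
      (∀ n : ℤ, ((((p : ℚ) ^ n - 1) / (p : ℚ) ^ n * c : ℚ) : WithTop ℚ) ≤ a n ∧
        ((((p : ℚ) ^ n - 1) / (p : ℚ) ^ n * c : ℚ) : WithTop ℚ) ≤ b n) ∧
      ∃ l m : ℤ, 0 ≤ l ∧ 0 ≤ m ∧ 0 < l + m ∧
        a l = ((((p : ℚ) ^ l - 1) / (p : ℚ) ^ l * c : ℚ) : WithTop ℚ) ∧
        (∀ n : ℤ, l < n → a n ≠ ((((p : ℚ) ^ n - 1) / (p : ℚ) ^ n * c : ℚ) : WithTop ℚ)) ∧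
        b m = ((((p : ℚ) ^ m - 1) / (p : ℚ) ^ m * c : ℚ) : WithTop ℚ) ∧
        (∀ n : ℤ, m < n → b n ≠ ((((p : ℚ) ^ n - 1) / (p : ℚ) ^ n * c : ℚ) : WithTop ℚ)) :=
  exists_min_and_maximal_indices_general p a b hvala hvalb h0a h0b h1a htopa htopb
end
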